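/- arXiv:2405.10447 — 6 statements merged into one kernel-verified Lean document; each statement's English description precedes it below -/
import Mathlib

section
/- The number of integer vectors (e1,e2,e3,e4) with e1+e2+e3+e4 = 0 and sum of positive entries at most l' is at most (10/3)l'^3 + 5l'^2 + (11/3)l' + 1. -/
/-!
Write `e = (a, b, c, -(a + b + c))`. The positive entries of `e` sum to at most `L` iff every
subset sum of `a, b, c` lies in `[-L, L]`; for `(b, c)` in the hexagon `|b|, |c|, |b + c| ≤ L`
this leaves a segment of `2L + 1 - |b| - |c|` values of `a`. Swapping `b` and `c` turns the total
length of these segments into `∑_{|b| ≤ L} (2L + 1 - |b|)(2L + 1 - 2|b|)`, which a discrete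
antiderivative evaluates to `(2L + 1)(5L² + 5L + 3) / 3`. The bound is therefore an equality.
-/

open Finset

theorem sum_filter_pos_eq_sum_max_zero {ι α : Type*} [AddCommMonoid α] [LinearOrder α]
    (s : Finset ι) (f : ι → α) : ∑ i ∈ s with 0 < f i, f i = ∑ i ∈ s, max (f i) 0 := by
  rw [sum_filter]
  refine sum_congr rfl fun i _ => ?_
  split_ifs with h
  · exact (max_eq_left h.le).symm
  · exact (max_eq_right (not_lt.1 h)).symm

theorem Int.sum_Icc_sub_sub_one {M : Type*} [AddCommGroup M] (F : ℤ → M) {lo hi : ℤ}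
    (h : lo - 1 ≤ hi) : ∑ x ∈ Icc lo hi, (F x - F (x - 1)) = F hi - F (lo - 1) := by
  induction hi, h using Int.leInduction with
  | base => simp
  | succ hi h ih =>
    rw [← insert_Icc_right_eq_Icc_add_one (by omega), sum_insert (by simp), ih, add_sub_cancel_right]
    abel

theorem abs_mul_add_one_sub_abs_sub_one_mul (x : ℤ) : |x| * (x + 1) - |x - 1| * x = 2 * |x| := by
  rcases le_or_gt 1 x with h | h
  · rw [abs_of_nonneg (by omega : 0 ≤ x), abs_of_nonneg (by omega : 0 ≤ x - 1)]; ring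
  · rw [abs_of_nonpos (by omega : x ≤ 0), abs_of_nonpos (by omega : x - 1 ≤ 0)]; ring

noncomputable def hexagon (L : ℤ) : Finset (ℤ × ℤ) :=
  (Icc (-L) L ×ˢ Icc (-L) L).filter fun w => |w.1 + w.2| ≤ L

theorem mem_hexagon {L b c : ℤ} :
    (b, c) ∈ hexagon L ↔ |b| ≤ L ∧ |c| ≤ L ∧ |b + c| ≤ L := by
  simp [hexagon, abs_le, and_assoc]

theorem sum_hexagon_snd (L : ℤ) {M : Type*} [AddCommMonoid M] (h : ℤ → M) :
    ∑ w ∈ hexagon L, h w.2 = ∑ w ∈ hexagon L, h w.1 := by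
  have swap_mem {w : ℤ × ℤ} (hw : w ∈ hexagon L) : w.swap ∈ hexagon L := by
    rw [← Prod.mk.eta (p := w), mem_hexagon] at hw
    rwa [Prod.swap, mem_hexagon, add_comm, and_left_comm]
  exact sum_nbij' Prod.swap Prod.swap (fun _ => swap_mem) (fun _ => swap_mem)
    (fun _ _ => rfl) (fun _ _ => rfl) fun _ _ => rfl

theorem card_hexagon_row {L b : ℤ} (hb : |b| ≤ L) :
    (#{c ∈ Icc (-L) L | |b + c| ≤ L} : ℤ) = 2 * L + 1 - |b| := by
  rw [show {c ∈ Icc (-L) L | |b + c| ≤ L} = Icc (-L - min b 0) (L - max b 0) by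
    ext c; simp only [mem_filter, mem_Icc, abs_le]; omega]
  rw [Int.card_Icc, abs_eq_max_neg] at *
  omega

theorem sum_hexagon_fst (L : ℤ) (h : ℤ → ℤ) :
    ∑ w ∈ hexagon L, h w.1 = ∑ b ∈ Icc (-L) L, (2 * L + 1 - |b|) * h b := by
  rw [hexagon, sum_filter, sum_product]
  refine sum_congr rfl fun b hb => ?_
  dsimp only
  rw [← sum_filter, sum_const, nsmul_eq_mul, card_hexagon_row (abs_le.2 (mem_Icc.1 hb))]

theorem sum_hexagon_weight (L : ℤ) :
    ∑ w ∈ hexagon L, (2 * L + 1 - |w.1| - |w.2|) =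
      ∑ b ∈ Icc (-L) L, (2 * L + 1 - |b|) * (2 * L + 1 - 2 * |b|) := by
  simp only [sum_sub_distrib, sum_hexagon_snd L (fun c => |c|)]
  rw [← sum_sub_distrib, ← sum_sub_distrib]
  simpa only [two_mul, sub_sub] using sum_hexagon_fst L fun b => 2 * L + 1 - 2 * |b|

theorem three_mul_sum_Icc_abs_weight (L : ℤ) (hL : 0 ≤ L) :
    3 * ∑ b ∈ Icc (-L) L, (2 * L + 1 - |b|) * (2 * L + 1 - 2 * |b|) =
      (2 * L + 1) * (5 * L ^ 2 + 5 * L + 3) := by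
  set Ψ : ℤ → ℤ := fun x => 6 * (2 * L + 1) ^ 2 * x - 9 * (2 * L + 1) * (|x| * (x + 1)) +
    2 * x * (x + 1) * (2 * x + 1)
  have hΨ (x : ℤ) : Ψ x - Ψ (x - 1) = 6 * ((2 * L + 1 - |x|) * (2 * L + 1 - 2 * |x|)) := by
    linear_combination (-9 * (2 * L + 1)) * abs_mul_add_one_sub_abs_sub_one_mul x - 12 * sq_abs x
  have htele := Int.sum_Icc_sub_sub_one Ψ (by omega : -L - 1 ≤ L)
  simp only [hΨ, ← mul_sum] at htele
  simp only [Ψ, abs_of_nonneg hL, abs_of_nonpos (by omega : -L - 1 ≤ 0)] at htele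
  linarith

noncomputable def limitedMagnitudeErrors (L : ℤ) : Finset (Fin 4 → ℤ) :=
  (hexagon L).biUnion fun w =>
    (Icc (-L - min w.1 0 - min w.2 0) (L - max w.1 0 - max w.2 0)).image
      fun a => ![a, w.1, w.2, -(a + w.1 + w.2)]

theorem mem_limitedMagnitudeErrors {L : ℤ} {e : Fin 4 → ℤ} :
    e ∈ limitedMagnitudeErrors L ↔ ∑ j, e j = 0 ∧ ∑ j, max (e j) 0 ≤ L := by
  simp only [limitedMagnitudeErrors, mem_biUnion, mem_image, mem_Icc, Prod.exists, mem_hexagon,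
    Fin.sum_univ_four, abs_le]
  constructor
  · rintro ⟨b, c, hbc, a, ha, rfl⟩
    simp only [Matrix.cons_val]
    omega
  · rintro ⟨hsum, hpos⟩
    refine ⟨e 1, e 2, by omega, e 0, by omega, ?_⟩
    ext j
    fin_cases j <;> simp only [Fin.zero_eta, Fin.mk_one, Fin.reduceFinMk, Matrix.cons_val]
    omega

theorem card_limitedMagnitudeErrors (L : ℤ) :
    (#(limitedMagnitudeErrors L) : ℤ) = ∑ w ∈ hexagon L, (2 * L + 1 - |w.1| - |w.2|) := by
  rw [limitedMagnitudeErrors, card_biUnion, Nat.cast_sum]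
  · refine sum_congr rfl fun w hw => ?_
    rw [← Prod.mk.eta (p := w), mem_hexagon] at hw
    rw [card_image_of_injective _ fun a a' h => by simpa using congrFun h 0, Int.card_Icc]
    simp only [abs_eq_max_neg] at hw ⊢
    omega
  · intro w _ w' _ hne
    simp only [Function.onFun, disjoint_left, mem_image]
    rintro _ ⟨a, _, rfl⟩ ⟨a', _, h⟩
    exact hne (Prod.ext (by simpa using (congrFun h 1).symm) (by simpa using (congrFun h 2).symm))

theorem three_mul_card_limitedMagnitudeErrors {L : ℤ} (hL : 0 ≤ L) :
    3 * (#(limitedMagnitudeErrors L) : ℤ) = (2 * L + 1) * (5 * L ^ 2 + 5 * L + 3) := by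
  rw [card_limitedMagnitudeErrors, sum_hexagon_weight, three_mul_sum_Icc_abs_weight L hL]

/-- The number of integer vectors (e1,e2,e3,e4) summing to 0 whose positive
entries sum to at most l' is at most (10/3)l'³ + 5l'² + (11/3)l' + 1
(stated multiplied by 3). -/
theorem count_limited_magnitude_errors_le (l' : ℕ) :
    3 * Nat.card {e : Fin 4 → ℤ // ∑ j, e j = 0 ∧
        (∑ j ∈ Finset.univ.filter (fun j => 0 < e j), e j) ≤ (l' : ℤ)}
      ≤ 10 * l' ^ 3 + 15 * l' ^ 2 + 11 * l' + 3 := by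
  have hcard : Nat.card {e : Fin 4 → ℤ // ∑ j, e j = 0 ∧
      (∑ j ∈ Finset.univ.filter (fun j => 0 < e j), e j) ≤ (l' : ℤ)} =
        #(limitedMagnitudeErrors l') := by
    rw [← Nat.card_eq_finsetCard]
    exact Nat.card_congr <| Equiv.subtypeEquivRight fun e => by
      rw [mem_limitedMagnitudeErrors, sum_filter_pos_eq_sum_max_zero]
  refine le_of_eq ?_
  zify
  rw [hcard, three_mul_card_limitedMagnitudeErrors (Int.natCast_nonneg l')]
  ring
end

section
/- Let l be a positive integer and b a critical vector. If two 4-tuples of nonnegative integers x and x' = x + e (with e an l-limited-magnitude probability error, i.e., Σe_j = 0 and sum of positive entries ≤ l) satisfy x' ≡ x + i·b (mod 2l+1) componentwise for some i ∈ [1,2l], then a contradiction arises; equivalently, two probability vectors whose componentwise difference mod (2l+1) equals i·b for some i ∈ [1,2l] cannot differ by an l-limited-magnitude probability error. -/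
/-- d (entries in [0,2l]) is a remainder error pattern if the sum of its
entries in [0,l] equals the sum of (2l+1 − d_j) over entries in [l+1,2l],
and this common value is at most l. -/
def IsRemErrPattern (l : ℕ) (d : Fin 4 → ℕ) : Prop :=
  (∀ j, d j ≤ 2 * l) ∧
  (∑ j ∈ Finset.univ.filter (fun j => d j ≤ l), d j)
    = (∑ j ∈ Finset.univ.filter (fun j => l + 1 ≤ d j), (2 * l + 1 - d j)) ∧
  (∑ j ∈ Finset.univ.filter (fun j => d j ≤ l), d j) ≤ l

/-- b is a critical vector. -/
def IsCritical (l : ℕ) (b : Fin 4 → ℕ) : Prop :=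
  b 0 = 1 ∧ (∑ j, b j) % (2 * l + 1) = 0 ∧
  ∀ i, 1 ≤ i → i ≤ 2 * l →
    ¬ IsRemErrPattern l (fun j => (i * b j) % (2 * l + 1))

/-- Two probability vectors whose componentwise difference mod (2l+1) equals
i·b for a critical vector b and some i ∈ [1,2l] cannot differ by an
l-limited-magnitude probability error. -/
theorem critical_vector_classes_valid (l : ℕ) (hl : 0 < l)
    (b : Fin 4 → ℕ) (hb : IsCritical l b)
    (i : ℕ) (hi1 : 1 ≤ i) (hi2 : i ≤ 2 * l)
    (x x' : Fin 4 → ℕ) (e : Fin 4 → ℤ)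
    (hsum : ∑ j, e j = 0)
    (hmag : (∑ j ∈ Finset.univ.filter (fun j => 0 < e j), e j) ≤ (l : ℤ))
    (hxe : ∀ j, (x' j : ℤ) = (x j : ℤ) + e j)
    (hcong : ∀ j, (x' j : ℤ) ≡ (x j : ℤ) + (i : ℤ) * (b j : ℤ)
      [ZMOD ((2 * l + 1 : ℕ) : ℤ)]) :
    False := by
  obtain ⟨hb0, hbsum, hbcrit⟩ := hb
  refine hbcrit i hi1 hi2 ?_
  set d : Fin 4 → ℕ := fun j => (i * b j) % (2 * l + 1) with hd
  have hm : (0:ℕ) < 2 * l + 1 := by omega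
  have hdlt : ∀ j, d j < 2 * l + 1 := fun j => Nat.mod_lt _ hm
  -- bounds on e
  have hP : ∀ j, e j ≤ (l : ℤ) := by
    intro j
    rcases le_or_gt (e j) 0 with h | h
    · have : (0:ℤ) ≤ l := Int.natCast_nonneg l
      linarith
    · have h1 := Finset.single_le_sum (f := e)
        (fun k hk => le_of_lt (Finset.mem_filter.mp hk).2)
        (Finset.mem_filter.mpr ⟨Finset.mem_univ j, h⟩)
      linarith
  have hsplit := Finset.sum_filter_add_sum_filter_not Finset.univ (fun j => 0 < e j) e
  have hN : ∀ j, -(l:ℤ) ≤ e j := by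
    intro j
    rcases lt_or_ge 0 (e j) with h | h
    · have : (0:ℤ) ≤ l := Int.natCast_nonneg l
      linarith
    · have h1 : -e j ≤ ∑ k ∈ Finset.univ.filter (fun k => ¬ 0 < e k), -e k := by
        apply Finset.single_le_sum (f := fun k => -e k)
        · intro k hk
          have h2 := (Finset.mem_filter.mp hk).2
          simp only [not_lt] at h2
          simpa using h2
        · exact Finset.mem_filter.mpr ⟨Finset.mem_univ j, by simpa using h⟩
      rw [Finset.sum_neg_distrib] at h1
      linarith
  -- divisibility
  have hdvd : ∀ j, ((2 * l + 1 : ℕ) : ℤ) ∣ (e j - (d j : ℤ)) := by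
    intro j
    have h1 := (hcong j).dvd
    have hcast : ((i * b j : ℕ) : ℤ) % ((2 * l + 1 : ℕ) : ℤ) = (d j : ℤ) := by
      rw [hd]; push_cast; ring
    have h2 : ((2 * l + 1 : ℕ) : ℤ) ∣ ((i * b j : ℕ) : ℤ) - (d j : ℤ) :=
      Int.dvd_self_sub_of_emod_eq hcast
    have h3 := dvd_sub h2 h1
    have h4 : ((i * b j : ℕ) : ℤ) - (d j : ℤ) -
        (((x j : ℤ) + (i : ℤ) * (b j : ℤ)) - (x' j : ℤ)) = e j - (d j : ℤ) := by
      push_cast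
      rw [hxe j]; ring
    rwa [h4] at h3
  -- key componentwise dichotomy
  have key : ∀ j, (d j ≤ l ∧ (d j : ℤ) = e j ∧ 0 ≤ e j) ∨
      (l + 1 ≤ d j ∧ (d j : ℤ) = e j + (2 * l + 1) ∧ e j < 0) := by
    intro j
    obtain ⟨k, hk⟩ := hdvd j
    have hdl := hdlt j
    have h1 := hP j
    have h2 := hN j
    have hc : ((2 * l + 1 : ℕ) : ℤ) = 2 * (l:ℤ) + 1 := by push_cast; ring
    have hd0 : (0:ℤ) ≤ (d j : ℤ) := Int.natCast_nonneg _
    have hdd : (d j : ℤ) < 2 * (l:ℤ) + 1 := by exact_mod_cast hdl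
    have hk01 : k = 0 ∨ k = -1 := by
      rcases le_or_gt 1 k with h | h
      · exfalso
        have hmul : ((2 * l + 1 : ℕ) : ℤ) * 1 ≤ ((2 * l + 1 : ℕ) : ℤ) * k :=
          mul_le_mul_of_nonneg_left h (by positivity)
        rw [hc] at hmul hk
        linarith
      · rcases le_or_gt k (-2) with h' | h'
        · exfalso
          have hmul : ((2 * l + 1 : ℕ) : ℤ) * k ≤ ((2 * l + 1 : ℕ) : ℤ) * (-2) :=
            mul_le_mul_of_nonneg_left h' (by positivity)
          rw [hc] at hmul hk
          linarith
        · omega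
    rcases hk01 with rfl | rfl
    · rw [mul_zero] at hk
      left
      omega
    · rw [mul_neg_one, hc] at hk
      right
      omega
  -- conclusion: d is a remainder error pattern
  unfold IsRemErrPattern
  have hAset : Finset.univ.filter (fun j => d j ≤ l)
      = Finset.univ.filter (fun j => 0 ≤ e j) := by
    apply Finset.filter_congr
    intro j _
    rcases key j with ⟨h1, h2, h3⟩ | ⟨h1, h2, h3⟩ <;> omega
  have hBset : Finset.univ.filter (fun j => l + 1 ≤ d j)
      = Finset.univ.filter (fun j => e j < 0) := by
    apply Finset.filter_congr
    intro j _
    rcases key j with ⟨h1, h2, h3⟩ | ⟨h1, h2, h3⟩ <;> omega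
  have hA : ((∑ j ∈ Finset.univ.filter (fun j => d j ≤ l), d j : ℕ) : ℤ)
      = ∑ j ∈ Finset.univ.filter (fun j => 0 < e j), e j := by
    rw [Nat.cast_sum, hAset]
    rw [Finset.sum_congr rfl (fun j hj => by
      rcases key j with ⟨h1, h2, h3⟩ | ⟨h1, h2, h3⟩
      · exact h2
      · exfalso
        have := (Finset.mem_filter.mp hj).2
        omega)]
    symm
    apply Finset.sum_subset
    · intro j hj
      simp only [Finset.mem_filter, Finset.mem_univ, true_and] at hj ⊢
      omega
    · intro j hj hnj
      simp only [Finset.mem_filter, Finset.mem_univ, true_and] at hj hnj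
      omega
  have hB : ((∑ j ∈ Finset.univ.filter (fun j => l + 1 ≤ d j), (2 * l + 1 - d j) : ℕ) : ℤ)
      = ∑ j ∈ Finset.univ.filter (fun j => e j < 0), (-e j) := by
    rw [Nat.cast_sum, hBset]
    apply Finset.sum_congr rfl
    intro j hj
    have hjm := (Finset.mem_filter.mp hj).2
    rcases key j with ⟨h1, h2, h3⟩ | ⟨h1, h2, h3⟩
    · exact absurd hjm (by omega)
    · have hdl := hdlt j
      omega
  have hneg_eq : ∑ j ∈ Finset.univ.filter (fun j => e j < 0), e j
      = ∑ j ∈ Finset.univ.filter (fun j => ¬ 0 < e j), e j := by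
    apply Finset.sum_subset
    · intro j hj
      simp only [Finset.mem_filter, Finset.mem_univ, true_and] at hj ⊢
      omega
    · intro j hj hnj
      simp only [Finset.mem_filter, Finset.mem_univ, true_and] at hj hnj
      omega
  have hNsum : ∑ j ∈ Finset.univ.filter (fun j => e j < 0), (-e j)
      = ∑ j ∈ Finset.univ.filter (fun j => 0 < e j), e j := by
    rw [Finset.sum_neg_distrib, hneg_eq]
    linarith [hsplit, hsum]
  refine ⟨fun j => by have := hdlt j; omega, ?_, ?_⟩
  · have : ((∑ j ∈ Finset.univ.filter (fun j => d j ≤ l), d j : ℕ) : ℤ)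
        = ((∑ j ∈ Finset.univ.filter (fun j => l + 1 ≤ d j), (2 * l + 1 - d j) : ℕ) : ℤ) := by
      rw [hA, hB, hNsum]
    exact_mod_cast this
  · have : ((∑ j ∈ Finset.univ.filter (fun j => d j ≤ l), d j : ℕ) : ℤ) ≤ (l : ℤ) := by
      rw [hA]; exact hmag
    exact_mod_cast this
end

section
/- Let q be a prime power, let E ⊆ GF(q)\{0} be a nonempty set of possible error values, and let I ⊆ GF(q)\{0} be a set containing 1 such that for all i ≠ j in I and all e1, e2 ∈ E, i·e1 ≠ j·e2. Let H be the r × n matrix whose columns are all vectors of the form i·h where i ∈ I and h ranges over the (q^r−1)/(q−1) pairwise linearly independent columns with first nonzero entry equal to 1. Then the code with parity check matrix H corrects any single error with value in E: distinct single-error words (differing in error position or error value from E) have distinct syndromes, all nonzero. -/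
/-- A major column: a column of length r over F whose first nonzero entry
equals 1. -/
def IsMajor {F : Type*} [Field F] {r : ℕ} (h : Fin r → F) : Prop :=
  ∃ m, h m = 1 ∧ ∀ m', m' < m → h m' = 0

/-- Improved Hamming code: with error set E and multiplier set I satisfying
the cross-condition, distinct single errors with values in E located at
columns i·h (i ∈ I, h major) have distinct, nonzero syndromes. -/
theorem improved_hamming_distinct_syndromes
    (q r : ℕ) (hq : IsPrimePow q) (F : Type) [Field F] [Fintype F]
    (hF : Fintype.card F = q)
    (E : Set F) (hEne : E.Nonempty) (hE0 : (0 : F) ∉ E)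
    (I : Set F) (hI1 : (1 : F) ∈ I) (hI0 : (0 : F) ∉ I)
    (hcross : ∀ i ∈ I, ∀ j ∈ I, i ≠ j → ∀ e1 ∈ E, ∀ e2 ∈ E, i * e1 ≠ j * e2) :
    ∀ i1 ∈ I, ∀ i2 ∈ I, ∀ h1 h2 : Fin r → F, IsMajor h1 → IsMajor h2 →
      ∀ e1 ∈ E, ∀ e2 ∈ E,
        (fun m => e1 * (i1 * h1 m)) ≠ (0 : Fin r → F) ∧
        ((fun m => e1 * (i1 * h1 m)) = (fun m => e2 * (i2 * h2 m)) →
          i1 = i2 ∧ h1 = h2 ∧ e1 = e2) := by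
  intro i1 hi1 i2 hi2 h1 h2 hm1 hm2 e1 he1 e2 he2
  obtain ⟨m1, h1m, h1lt⟩ := hm1
  obtain ⟨m2, h2m, h2lt⟩ := hm2
  have he1ne : e1 ≠ 0 := fun h => hE0 (h ▸ he1)
  have he2ne : e2 ≠ 0 := fun h => hE0 (h ▸ he2)
  have hi1ne : i1 ≠ 0 := fun h => hI0 (h ▸ hi1)
  have hi2ne : i2 ≠ 0 := fun h => hI0 (h ▸ hi2)
  constructor
  · intro hzero
    have := congrFun hzero m1
    rw [h1m] at this
    simp [he1ne, hi1ne] at this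
  · intro heq
    have hpt : ∀ m, e1 * (i1 * h1 m) = e2 * (i2 * h2 m) := fun m => congrFun heq m
    have hm12 : m1 = m2 := by
      by_contra hne
      rcases lt_or_gt_of_ne hne with hlt | hlt
      · have h := hpt m1
        rw [h1m, h2lt m1 hlt] at h
        simp [he1ne, hi1ne] at h
      · have h := hpt m2
        rw [h2m, h1lt m2 hlt] at h
        simp [he2ne, hi2ne] at h
    have key : i1 * e1 = i2 * e2 := by
      have h := hpt m1
      rw [h1m, hm12, h2m] at h
      linear_combination h
    have hii : i1 = i2 := by
      by_contra hne
      exact hcross i1 hi1 i2 hi2 hne e1 he1 e2 he2 key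
    have hee : e1 = e2 := by
      rw [hii] at key
      exact mul_left_cancel₀ hi2ne key
    refine ⟨hii, funext fun m => ?_, hee⟩
    have h := hpt m
    rw [hii, hee] at h
    exact mul_left_cancel₀ hi2ne (mul_left_cancel₀ he2ne h)
end

section
/- Let q be a prime power, E a subset of the nonzero elements of GF(q), and I_max = floor((q−1)/|E|). Then: (a) there exists a set I of nonzero elements with |I| = I_max such that the sets i·E for i ∈ I are pairwise disjoint (equivalently, i·e1 ≠ j·e2 for distinct i,j ∈ I and e1,e2 ∈ E, after a suitable relabeling of E as powers of a primitive element); and (b) no set I with the pairwise-disjointness property can have more than I_max elements. -/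
/-- With I_max = ⌊(q−1)/|E|⌋: (a) there is an error set E of size s and a set
I of I_max nonzero multipliers whose dilates i·E are pairwise disjoint;
(b) no such multiplier set can have more than I_max elements. -/
theorem Imax_optimal (q s : ℕ) (hq : IsPrimePow q)
    (F : Type) [Field F] [Fintype F] (hF : Fintype.card F = q)
    (hs1 : 1 ≤ s) (hs2 : s ≤ q - 1) :
    (∃ E : Finset F, E.card = s ∧ (0 : F) ∉ E ∧
      ∃ I : Finset F, I.card = (q - 1) / s ∧ (0 : F) ∉ I ∧
        ∀ i ∈ I, ∀ j ∈ I, i ≠ j → ∀ e1 ∈ E, ∀ e2 ∈ E, i * e1 ≠ j * e2) ∧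
    (∀ E : Finset F, E.card = s → (0 : F) ∉ E →
      ∀ I : Finset F, (0 : F) ∉ I →
        (∀ i ∈ I, ∀ j ∈ I, i ≠ j → ∀ e1 ∈ E, ∀ e2 ∈ E, i * e1 ≠ j * e2) →
        I.card ≤ (q - 1) / s) := by
  classical
  have hspos : 0 < s := hs1
  set n := q - 1 with hn
  have hn1 : 1 ≤ n := le_trans hs1 hs2
  have hcard : Fintype.card Fˣ = n := by rw [Fintype.card_units, hF]
  obtain ⟨g, hg⟩ := IsCyclic.exists_generator (α := Fˣ)
  have hord : orderOf g = n := by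
    rw [orderOf_eq_card_of_forall_mem_zpowers hg]
    simp [Nat.card_eq_fintype_card, hcard]
  have hinj : ∀ a b : ℕ, a < n → b < n → (g ^ a : Fˣ) = g ^ b → a = b := by
    intro a b ha hb hab
    exact pow_injOn_Iio_orderOf (by simpa [hord] using ha) (by simpa [hord] using hb) hab
  set m := n / s with hm
  have hm1 : 1 ≤ m := (Nat.one_le_div_iff hspos).mpr hs2
  have hms : m * s ≤ n := Nat.div_mul_le_self n s
  constructor
  · refine ⟨(Finset.range s).image (fun k => ((g ^ (m * k) : Fˣ) : F)), ?_, ?_,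
      (Finset.range m).image (fun j => ((g ^ j : Fˣ) : F)), ?_, ?_, ?_⟩
    · rw [Finset.card_image_of_injOn, Finset.card_range]
      intro a ha b hb hab
      simp only [Finset.mem_coe, Finset.mem_range] at ha hb
      have := hinj (m * a) (m * b)
        (lt_of_lt_of_le (by exact Nat.mul_lt_mul_left hm1 |>.mpr ha) hms)
        (lt_of_lt_of_le (by exact Nat.mul_lt_mul_left hm1 |>.mpr hb) hms)
        (Units.ext hab)
      exact Nat.eq_of_mul_eq_mul_left hm1 this
    · simp only [Finset.mem_image, Finset.mem_range]
      rintro ⟨k, -, hk⟩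
      exact Units.ne_zero _ hk
    · rw [Finset.card_image_of_injOn, Finset.card_range]
      intro a ha b hb hab
      simp only [Finset.mem_coe, Finset.mem_range] at ha hb
      exact hinj a b (lt_of_lt_of_le (lt_of_lt_of_le ha (Nat.le_mul_of_pos_right m hspos)) hms)
        (lt_of_lt_of_le (lt_of_lt_of_le hb (Nat.le_mul_of_pos_right m hspos)) hms)
        (Units.ext hab)
    · simp only [Finset.mem_image, Finset.mem_range]
      rintro ⟨k, -, hk⟩
      exact Units.ne_zero _ hk
    · intro i hi j hj hij e1 he1 e2 he2 heq
      simp only [Finset.mem_image, Finset.mem_range] at hi hj he1 he2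
      obtain ⟨a, ha, rfl⟩ := hi
      obtain ⟨b, hb, rfl⟩ := hj
      obtain ⟨k1, hk1, rfl⟩ := he1
      obtain ⟨k2, hk2, rfl⟩ := he2
      have h1 : ((g ^ (a + m * k1) : Fˣ) : F) = ((g ^ (b + m * k2) : Fˣ) : F) := by
        rw [pow_add, pow_add]
        push_cast
        exact heq
      have hlt : ∀ c d : ℕ, c < m → d < s → c + m * d < n := by
        intro c d hc hd
        calc c + m * d < m + m * d := by omega
          _ = m * (d + 1) := by ring
          _ ≤ m * s := Nat.mul_le_mul_left m (by omega)
          _ ≤ n := hms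
      have he := hinj _ _ (hlt a k1 ha hk1) (hlt b k2 hb hk2) (Units.ext h1)
      have hab : a = b := by
        have h2 : (a + m * k1) % m = (b + m * k2) % m := by rw [he]
        rwa [Nat.add_mul_mod_self_left, Nat.add_mul_mod_self_left,
          Nat.mod_eq_of_lt ha, Nat.mod_eq_of_lt hb] at h2
      subst hab
      exact hij rfl
  · intro E hEcard hE0 I hI0 hdisj
    have key : Set.InjOn (fun p : F × F => p.1 * p.2) ↑(I ×ˢ E) := by
      rintro ⟨i, e1⟩ hp ⟨j, e2⟩ hq' heq
      simp only [Finset.coe_product, Set.mem_prod, Finset.mem_coe] at hp hq'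
      simp only at heq
      by_cases hij : i = j
      · subst hij
        have hi0 : i ≠ 0 := fun h => hI0 (h ▸ hp.1)
        exact Prod.ext rfl (mul_left_cancel₀ hi0 heq)
      · exact absurd heq (hdisj i hp.1 j hq'.1 hij e1 hp.2 e2 hq'.2)
    have hsub : (I ×ˢ E).image (fun p : F × F => p.1 * p.2) ⊆ Finset.univ.erase 0 := by
      intro x hx
      simp only [Finset.mem_image, Finset.mem_product] at hx
      obtain ⟨⟨i, e⟩, ⟨hi, he⟩, rfl⟩ := hx
      refine Finset.mem_erase.mpr ⟨?_, Finset.mem_univ _⟩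
      exact mul_ne_zero (fun h => hI0 (h ▸ hi)) (fun h => hE0 (h ▸ he))
    have hcount : I.card * s ≤ n := by
      have h1 : ((I ×ˢ E).image (fun p : F × F => p.1 * p.2)).card ≤ n := by
        calc _ ≤ (Finset.univ.erase (0 : F)).card := Finset.card_le_card hsub
          _ = q - 1 := by rw [Finset.card_erase_of_mem (Finset.mem_univ _), Finset.card_univ, hF]
      rwa [Finset.card_image_of_injOn key, Finset.card_product, hEcard] at h1
    exact (Nat.le_div_iff_mul_le hspos).mpr hcount
end

section
/- Suppose there exists a Gray mapping for resolution k1 (an injective map from GF(q)^g into probability vectors of resolution k1 such that any two mapped probability vectors differing by a 2l-limited-magnitude probability error have Gray codewords at Hamming distance exactly 1). Then for every k2 > k1 there exists a Gray mapping for resolution k2, obtained by adding k2−k1 to the last coordinate of every image vector. -/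
/-- x and y differ by an l2-limited-magnitude probability error: the
difference y − x sums to 0 and its positive part is at most l2. -/
def DiffByLM (l2 : ℕ) (x y : Fin 4 → ℕ) : Prop :=
  (∑ j, ((y j : ℤ) - (x j : ℤ))) = 0 ∧
  (∑ j ∈ Finset.univ.filter (fun j => (x j : ℤ) < (y j : ℤ)),
      ((y j : ℤ) - (x j : ℤ))) ≤ (l2 : ℤ)

/-- A Gray mapping: an injective map from GF(q)^g into probability vectors of
resolution k such that any two distinct image vectors differing by a
2l-limited-magnitude probability error have Hamming distance 1. -/
def IsGrayMap (q g k l : ℕ) (M : (Fin g → ZMod q) → (Fin 4 → ℕ)) : Prop :=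
  Function.Injective M ∧ (∀ a, ∑ j, M a j = k) ∧
  ∀ a b, a ≠ b → DiffByLM (2 * l) (M a) (M b) → hammingDist a b = 1

/-- If a Gray mapping exists for resolution k1, then adding k2−k1 to the last
coordinate of every image vector yields a Gray mapping for any k2 > k1. -/
theorem gray_map_larger_resolution (q g k1 k2 l : ℕ) (hk : k1 < k2)
    (M : (Fin g → ZMod q) → (Fin 4 → ℕ)) (hM : IsGrayMap q g k1 l M) :
    IsGrayMap q g k2 l
      (fun a => Function.update (M a) 3 (M a 3 + (k2 - k1))) := by
  obtain ⟨hinj, hsum, hdist⟩ := hM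
  have key : ∀ a b : Fin g → ZMod q, ∀ j : Fin 4,
      ((Function.update (M b) 3 (M b 3 + (k2 - k1)) j : ℤ) -
        (Function.update (M a) 3 (M a 3 + (k2 - k1)) j : ℤ))
      = ((M b j : ℤ) - (M a j : ℤ)) := by
    intro a b j
    by_cases hj : j = 3
    · subst hj; simp [Function.update_apply]
    · simp [Function.update_apply, hj]
  have keylt : ∀ a b : Fin g → ZMod q, ∀ j : Fin 4,
      (((Function.update (M a) 3 (M a 3 + (k2 - k1)) j : ℤ) <
        (Function.update (M b) 3 (M b 3 + (k2 - k1)) j : ℤ))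
      ↔ ((M a j : ℤ) < (M b j : ℤ))) := by
    intro a b j
    have := key a b j
    omega
  refine ⟨?_, ?_, ?_⟩
  · intro a b h
    apply hinj
    funext j
    have h3 := key a b j
    have hj := congrFun h j
    simp only at hj
    rw [hj] at h3
    omega
  · intro a
    have := hsum a
    rw [Fin.sum_univ_four] at this ⊢
    simp only [Function.update_of_ne (show (0:Fin 4) ≠ 3 by decide),
      Function.update_of_ne (show (1:Fin 4) ≠ 3 by decide),
      Function.update_of_ne (show (2:Fin 4) ≠ 3 by decide),
      Function.update_self]
    omega
  · intro a b hab hd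
    apply hdist a b hab
    obtain ⟨h1, h2⟩ := hd
    constructor
    · rw [← h1]
      apply Finset.sum_congr rfl
      intro j _
      exact (key a b j).symm
    · calc _ = _ := Finset.sum_congr (Finset.filter_congr (fun j _ => (keylt a b j).symm))
            (fun j _ => (key a b j).symm)
        _ ≤ _ := h2
end

section
/- Let C' be a length-n code over the remainder-vector alphabet R (of size (2l+1)^3) that corrects t arbitrary errors, and let s = floor(k/(2l+1)) with k ≥ 6l. Form C by attaching to each codeword of C' all possible quotient-vector words (via x_i = (2l+1)·a_i + b_i componentwise). Then C ⊆ X^n is an (l,t) limited-magnitude probability error correction code, and C(max(s,3),3)^n · |C'| ≤ |C| ≤ C(s+3,3)^n · |C'|. -/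
/-!
Write each symbol as `x = (2l+1) a + b` with remainder vector `b` and quotient vector `a`.
An LMPE moves every entry by at most `l < (2l+1)/2` and touches at most `t` symbols. Hence two
codewords reaching a common word have remainder words at Hamming distance `≤ 2t`, so equal
remainder words, and then each entry is pinned down by its residue and its distance `≤ l` from
the received entry.

The symbols with remainder vector `b` correspond to the quotient vectors summing to
`s' = (k - Σ b)/(2l+1)`, of which there are `C(s'+3, 3)` by stars and bars; since `Σ b ≤ 8l` and
`k ≥ 6l`, `s - 3 ≤ s' ≤ s`.
-/

open Finset

/-- A word of length n over the probability vectors of resolution k. -/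
def IsProbWord (n k : ℕ) (x : Fin n → Fin 4 → ℕ) : Prop :=
  ∀ i, ∑ j, x i j = k

/-- An (l,t) limited-magnitude probability error. -/
def IsLMPE (n l t : ℕ) (e : Fin n → Fin 4 → ℤ) : Prop :=
  (Finset.univ.filter (fun i => e i ≠ 0)).card ≤ t ∧
  ∀ i, (∑ j, e i j) = 0 ∧
    (∑ j ∈ Finset.univ.filter (fun j => 0 < e i j), e i j) ≤ (l : ℤ)

/-- `y` is obtained from `x` by an (l,t) LMPE (both words staying valid). -/
def LMPEReaches (n k l t : ℕ) (x y : Fin n → Fin 4 → ℕ) : Prop :=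
  IsProbWord n k x ∧ IsProbWord n k y ∧
  ∃ e : Fin n → Fin 4 → ℤ, IsLMPE n l t e ∧
    ∀ i j, (y i j : ℤ) = (x i j : ℤ) + e i j

/-- A set of words corrects (l,t) LMPE iff error balls around distinct
codewords are disjoint. -/
def CorrectsLMPESet (n k l t : ℕ) (C : Set (Fin n → Fin 4 → ℕ)) : Prop :=
  ∀ x ∈ C, ∀ z ∈ C, x ≠ z → ∀ y : Fin n → Fin 4 → ℕ,
    ¬ (LMPEReaches n k l t x y ∧ LMPEReaches n k l t z y)

theorem abs_le_of_sum_eq_zero {ι α : Type*} [Fintype ι] [AddCommGroup α] [LinearOrder α]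
    [IsOrderedAddMonoid α] {e : ι → α} {l : α} (hzero : ∑ j, e j = 0)
    (hpos : ∑ j with 0 < e j, e j ≤ l) (j : ι) : |e j| ≤ l := by
  rcases le_or_gt (e j) 0 with hj | hj
  · rw [abs_of_nonpos hj]
    have hsplit := sum_filter_add_sum_filter_not univ (fun j => 0 < e j) e
    rw [hzero] at hsplit
    have : -e j ≤ ∑ j with ¬0 < e j, -e j :=
      single_le_sum (f := fun i => -e i) (fun i hi => by simpa using (mem_filter.mp hi).2)
        (by simpa using hj)
    rw [sum_neg_distrib, ← eq_neg_of_add_eq_zero_left hsplit] at this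
    exact this.trans hpos
  · rw [abs_of_pos hj]
    exact (single_le_sum (fun i hi => (mem_filter.mp hi).2.le) (by simpa using hj)).trans hpos

theorem Int.eq_of_modEq_of_abs_sub_le {M l x z y : ℤ} (hM : 2 * l < M) (hxz : x ≡ z [ZMOD M])
    (hx : |y - x| ≤ l) (hz : |y - z| ≤ l) : x = z := by
  have hsub : |z - x| < M := by
    calc |z - x| = |(y - x) - (y - z)| := by ring_nf
      _ ≤ |y - x| + |y - z| := abs_sub _ _
      _ < M := by linarith
  exact (sub_eq_zero.mp (Int.eq_zero_of_abs_lt_dvd hxz.dvd hsub)).symm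

namespace LMPEReaches

variable {n k l t : ℕ} {x y : Fin n → Fin 4 → ℕ}

theorem abs_sub_le (h : LMPEReaches n k l t x y) (i : Fin n) (j : Fin 4) :
    |(y i j : ℤ) - x i j| ≤ l := by
  obtain ⟨-, -, e, ⟨-, he⟩, hy⟩ := h
  rw [hy, add_sub_cancel_left]
  exact abs_le_of_sum_eq_zero (he i).1 (he i).2 j

theorem hammingDist_le (h : LMPEReaches n k l t x y) : hammingDist x y ≤ t := by
  obtain ⟨-, -, e, ⟨he, -⟩, hy⟩ := h
  refine le_trans (card_le_card fun i hi => ?_) he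
  simp only [mem_filter, mem_univ, true_and] at hi ⊢
  intro hei
  refine hi (funext fun j => ?_)
  have : (y i j : ℤ) = x i j := by simp [hy i j, hei]
  exact_mod_cast this.symm

end LMPEReaches

theorem correctsLMPESet_residueCode {n k l t : ℕ} {C' : Finset (Fin n → Fin 4 → ℕ)}
    (hdist : ∀ b ∈ C', ∀ c ∈ C', b ≠ c → 2 * t + 1 ≤ hammingDist b c) :
    CorrectsLMPESet n k l t
      {x | (∀ i, ∑ j, x i j = k) ∧ (fun i j => x i j % (2 * l + 1)) ∈ C'} := by
  rintro x ⟨-, hx⟩ z ⟨-, hz⟩ hne y ⟨hxy, hzy⟩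
  have hres : (fun i j => x i j % (2 * l + 1)) = fun i j => z i j % (2 * l + 1) := by
    by_contra hres
    have hfar := hdist _ hx _ hz hres
    have hnear : hammingDist (fun i j => x i j % (2 * l + 1)) (fun i j => z i j % (2 * l + 1))
        ≤ t + t :=
      calc _ ≤ hammingDist x z := hammingDist_comp_le_hammingDist fun _ v j => v j % (2 * l + 1)
        _ ≤ hammingDist x y + hammingDist y z := hammingDist_triangle x y z
        _ ≤ t + t := by
          rw [hammingDist_comm y]; exact add_le_add hxy.hammingDist_le hzy.hammingDist_le
    omega
  refine hne (funext fun i => funext fun j => ?_)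
  have hmod : (x i j : ℤ) ≡ z i j [ZMOD (2 * l + 1 : ℕ)] :=
    Int.natCast_modEq_iff.mpr (congrFun (congrFun hres i) j)
  exact_mod_cast Int.eq_of_modEq_of_abs_sub_le (by push_cast; omega) hmod
    (hxy.abs_sub_le i j) (hzy.abs_sub_le i j)

theorem exists_quotient_sum_of_residues {l k : ℕ} (hk : 6 * l ≤ k) {r : Fin 4 → ℕ}
    (hr : ∀ j, r j ≤ 2 * l) (hmod : ∑ j, r j ≡ k [MOD 2 * l + 1]) :
    ∃ s, (2 * l + 1) * s + ∑ j, r j = k ∧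
      k / (2 * l + 1) ≤ s + 3 ∧ s ≤ k / (2 * l + 1) := by
  have hsum : ∑ j, r j ≤ 8 * l := by
    calc ∑ j, r j ≤ ∑ _j : Fin 4, 2 * l := sum_le_sum fun j _ => hr j
      _ = 8 * l := by simp; ring
  -- a residue sum exceeding `k` would exceed it by a full period `2l+1 > 8l - k`
  have hle : ∑ j, r j ≤ k := by
    by_contra! hlt
    have := Nat.le_of_dvd (by omega) ((Nat.modEq_iff_dvd' hlt.le).mp hmod.symm)
    omega
  obtain ⟨s, hs⟩ := (Nat.modEq_iff_dvd' hle).mp hmod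
  have hk_eq : k = (2 * l + 1) * s + ∑ j, r j := by omega
  have hq : k / (2 * l + 1) = s + (∑ j, r j) / (2 * l + 1) := by
    rw [hk_eq, Nat.mul_add_div (Nat.succ_pos _)]
  have hr3 : (∑ j, r j) / (2 * l + 1) ≤ 3 := by
    refine Nat.le_of_lt_succ ((Nat.div_lt_iff_lt_mul (by omega)).mpr ?_)
    omega
  exact ⟨s, hk_eq.symm, by rw [hq]; omega, hq ▸ Nat.le_add_right _ _⟩

section Counting

variable {ι : Type*} [Fintype ι] [DecidableEq ι]

def residueFiber (M k : ℕ) (r : ι → ℕ) : Finset (ι → ℕ) :=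
  {v ∈ piAntidiag univ k | ∀ j, v j % M = r j}

theorem mem_residueFiber {M k : ℕ} {r v : ι → ℕ} :
    v ∈ residueFiber M k r ↔ ∑ j, v j = k ∧ ∀ j, v j % M = r j := by
  simp [residueFiber]

theorem card_piAntidiag_univ (m : ℕ) :
    #(piAntidiag (univ : Finset ι) m) = (Fintype.card ι + m - 1).choose m := by
  rw [← map_sym_eq_piAntidiag, card_map, sym_univ, card_univ, Sym.card_sym_eq_choose]

theorem card_residueFiber {M k s : ℕ} {r : ι → ℕ} (hM : 0 < M) (hr : ∀ j, r j < M)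
    (hk : M * s + ∑ j, r j = k) :
    #(residueFiber M k r) = #(piAntidiag (univ : Finset ι) s) := by
  have sum_split (a : ι → ℕ) : ∑ j, (M * a j + r j) = M * ∑ j, a j + ∑ j, r j := by
    rw [sum_add_distrib, mul_sum]
  have decomp {v} (hv : v ∈ residueFiber M k r) : (fun j => M * (v j / M) + r j) = v :=
    funext fun j => by rw [← (mem_residueFiber.mp hv).2 j, Nat.div_add_mod]
  symm
  apply card_nbij' (fun a j => M * a j + r j) (fun v j => v j / M)
  · intro a ha
    simp only [mem_coe, mem_residueFiber, mem_piAntidiag, mem_univ, implies_true,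
      and_true] at ha ⊢
    refine ⟨by rw [sum_split, ha, hk], fun j => ?_⟩
    rw [Nat.mul_add_mod, Nat.mod_eq_of_lt (hr j)]
  · intro v hv
    have hsum := congrArg (fun w : ι → ℕ => ∑ j, w j) (decomp hv)
    simp only [sum_split, (mem_residueFiber.mp hv).1] at hsum
    simp only [mem_coe, mem_piAntidiag, mem_univ, implies_true, and_true]
    apply Nat.eq_of_mul_eq_mul_left hM
    omega
  · intro a _
    funext j
    dsimp only
    rw [Nat.mul_add_div hM, Nat.div_eq_of_lt (hr j), add_zero]
  · exact fun v hv => decomp hv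

variable {κ : Type*} [Fintype κ] [DecidableEq κ]

theorem mem_piFinset_residueFiber {M k : ℕ} {b x : κ → ι → ℕ} :
    x ∈ Fintype.piFinset (fun i => residueFiber M k (b i)) ↔
      (∀ i, ∑ j, x i j = k) ∧ (fun i j => x i j % M) = b := by
  simp only [Fintype.mem_piFinset, mem_residueFiber, forall_and, funext_iff]

theorem natCard_residueCode (M k : ℕ) (C' : Finset (κ → ι → ℕ)) :
    Nat.card {x : κ → ι → ℕ | (∀ i, ∑ j, x i j = k) ∧ (fun i j => x i j % M) ∈ C'} =
      ∑ b ∈ C', ∏ i, #(residueFiber M k (b i)) := by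
  have hset :
      {x : κ → ι → ℕ | (∀ i, ∑ j, x i j = k) ∧ (fun i j => x i j % M) ∈ C'} =
      ↑(C'.biUnion fun b => Fintype.piFinset fun i => residueFiber M k (b i)) := by
    ext x
    simp only [coe_biUnion, Set.mem_iUnion, mem_coe, mem_piFinset_residueFiber,
      Set.mem_ofPred_eq]
    constructor
    · rintro ⟨hsum, hx⟩
      exact ⟨_, hx, hsum, rfl⟩
    · rintro ⟨b, hb, hsum, rfl⟩
      exact ⟨hsum, hb⟩
  have hdisj : (C' : Set (κ → ι → ℕ)).PairwiseDisjoint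
      fun b => Fintype.piFinset fun i => residueFiber M k (b i) := by
    intro b _ c _ hbc
    refine disjoint_left.mpr fun x hb hc => hbc ?_
    rw [mem_piFinset_residueFiber] at hb hc
    exact hb.2.symm.trans hc.2
  rw [hset, Nat.card_coe_set_eq, Set.ncard_coe_finset, card_biUnion hdisj]
  simp only [Fintype.card_piFinset]

end Counting

theorem card_residueFiber_bounds {l k : ℕ} (hk : 6 * l ≤ k) {r : Fin 4 → ℕ}
    (hr : ∀ j, r j ≤ 2 * l) (hmod : ∑ j, r j ≡ k [MOD 2 * l + 1]) :
    (max (k / (2 * l + 1)) 3).choose 3 ≤ #(residueFiber (2 * l + 1) k r) ∧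
      #(residueFiber (2 * l + 1) k r) ≤ (k / (2 * l + 1) + 3).choose 3 := by
  obtain ⟨s, hs, hlow, hhigh⟩ := exists_quotient_sum_of_residues hk hr hmod
  rw [card_residueFiber (Nat.succ_pos _) (fun j => Nat.lt_succ_of_le (hr j)) hs,
    card_piAntidiag_univ, Fintype.card_fin, show 4 + s - 1 = s + 3 by omega,
    Nat.choose_symm_add]
  exact ⟨Nat.choose_le_choose _ (max_le hlow (Nat.le_add_left 3 s)),
    Nat.choose_le_choose _ (Nat.add_le_add_right hhigh 3)⟩

theorem remainder_class_code_general (n k l t : ℕ) (hk : 6 * l ≤ k)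
    (C' : Finset (Fin n → Fin 4 → ℕ))
    (hC'R : ∀ b ∈ C', ∀ i, (∀ j, b i j ≤ 2 * l) ∧
      (∑ j, b i j) % (2 * l + 1) = k % (2 * l + 1))
    (hC'dist : ∀ b ∈ C', ∀ c ∈ C', b ≠ c → 2 * t + 1 ≤ hammingDist b c) :
    CorrectsLMPESet n k l t
      {x | (∀ i, ∑ j, x i j = k) ∧ (fun i j => x i j % (2 * l + 1)) ∈ C'} ∧
    ((max (k / (2 * l + 1)) 3).choose 3) ^ n * C'.card ≤
      Nat.card {x : Fin n → Fin 4 → ℕ |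
        (∀ i, ∑ j, x i j = k) ∧ (fun i j => x i j % (2 * l + 1)) ∈ C'} ∧
    Nat.card {x : Fin n → Fin 4 → ℕ |
        (∀ i, ∑ j, x i j = k) ∧ (fun i j => x i j % (2 * l + 1)) ∈ C'} ≤
      ((k / (2 * l + 1) + 3).choose 3) ^ n * C'.card := by
  refine ⟨correctsLMPESet_residueCode hC'dist, ?_⟩
  rw [natCard_residueCode]
  have hbounds b (hb : b ∈ C') i := card_residueFiber_bounds hk (hC'R b hb i).1 (hC'R b hb i).2
  constructor
  · calc (max (k / (2 * l + 1)) 3).choose 3 ^ n * #C'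
        = ∑ _b ∈ C', (max (k / (2 * l + 1)) 3).choose 3 ^ n := by
          rw [sum_const, smul_eq_mul, mul_comm]
      _ ≤ _ := sum_le_sum fun b hb => by
          simpa using pow_card_le_prod univ _ _ fun i _ => (hbounds b hb i).1
  · calc _ ≤ ∑ _b ∈ C', (k / (2 * l + 1) + 3).choose 3 ^ n := sum_le_sum fun b hb => by
          simpa using prod_le_pow_card univ _ _ fun i _ => (hbounds b hb i).2
      _ = _ := by rw [sum_const, smul_eq_mul, mul_comm]

/-- Construction 1 (remainder classes): attaching all compatible quotient
vectors to a code C' over the remainder vectors of minimum Hamming distance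
2t+1 yields an (l,t) LMPE correction code C over the probability words, with
C(max(s,3),3)^n·|C'| ≤ |C| ≤ C(s+3,3)^n·|C'|, where s = ⌊k/(2l+1)⌋. -/
theorem remainder_class_code (n k l t : ℕ) (hl : 0 < l) (hk : 6 * l ≤ k)
    (hn : 0 < n)
    (C' : Finset (Fin n → Fin 4 → ℕ))
    (hC'R : ∀ b ∈ C', ∀ i, (∀ j, b i j ≤ 2 * l) ∧
      (∑ j, b i j) % (2 * l + 1) = k % (2 * l + 1))
    (hC'dist : ∀ b ∈ C', ∀ c ∈ C', b ≠ c → 2 * t + 1 ≤ hammingDist b c) :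
    CorrectsLMPESet n k l t
      {x | (∀ i, ∑ j, x i j = k) ∧ (fun i j => x i j % (2 * l + 1)) ∈ C'} ∧
    ((max (k / (2 * l + 1)) 3).choose 3) ^ n * C'.card ≤
      Nat.card {x : Fin n → Fin 4 → ℕ |
        (∀ i, ∑ j, x i j = k) ∧ (fun i j => x i j % (2 * l + 1)) ∈ C'} ∧
    Nat.card {x : Fin n → Fin 4 → ℕ |
        (∀ i, ∑ j, x i j = k) ∧ (fun i j => x i j % (2 * l + 1)) ∈ C'} ≤
      ((k / (2 * l + 1) + 3).choose 3) ^ n * C'.card :=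
  remainder_class_code_general n k l t hk C' hC'R hC'dist
end
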